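/- arXiv:2402.01589 — 2 statements merged into one kernel-verified Lean document; each statement's English description precedes it below -/
import Mathlib

section
/- A finite strict partial order (P, <) is an interval order (i.e., x < z and y < w imply x < w or y < z) if and only if the relation ≺ on its maximal antichains, given by U ≺ T iff U ≠ T and no element of T is below any element of U, is a linear order. -/
/-- `Q` is an antichain for the strict order `lt`. -/
def IsLtAntichain {P : Type} (lt : P → P → Prop) (Q : Set P) : Prop :=
  ∀ x ∈ Q, ∀ y ∈ Q, x ≠ y → ¬ lt x y ∧ ¬ lt y x

/-- `Q` is a maximal antichain for `lt`. -/
def IsLtMaxAntichain {P : Type} (lt : P → P → Prop) (Q : Set P) : Prop :=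
  IsLtAntichain lt Q ∧ ∀ R : Set P, IsLtAntichain lt R → Q ⊆ R → Q = R

/-- The order `≺` on maximal antichains: `U ≺ T` iff `U ≠ T` and no element
of `T` lies below any element of `U`. -/
def achPrec {P : Type} (lt : P → P → Prop) (U T : Set P) : Prop :=
  U ≠ T ∧ ∀ u ∈ U, ∀ t ∈ T, ¬ lt t u

/-!
If `U ⊀ V` and `V ⊀ U` for distinct maximal antichains, there are `v < u` and `u' < v'` with
`u, u' ∈ U` and `v, v' ∈ V`; the interval property then makes `v < v'` or `u' < u`, which is
impossible inside an antichain. Conversely, a failure `x < z`, `y < w`, `x ≮ w`, `y ≮ z` of the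
interval property yields antichains `{x, w}` and `{y, z}`, and no two maximal antichains extending
them are comparable. Transitivity of `≺` holds in every strict order: every element lies in or is
comparable to an element of a maximal antichain, and `U ≺ V ≺ U` would make `U ∪ V` an antichain.
-/

theorem isLtAntichain_iff_isAntichain {P : Type} (lt : P → P → Prop) (Q : Set P) :
    IsLtAntichain lt Q ↔ IsAntichain lt Q :=
  ⟨fun h _ hx _ hy hne => (h _ hx _ hy hne).1,
    fun h _ hx _ hy hne => ⟨h hx hy hne, h hy hx hne.symm⟩⟩

theorem isLtMaxAntichain_iff_isMaxAntichain {P : Type} (lt : P → P → Prop) (Q : Set P) :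
    IsLtMaxAntichain lt Q ↔ IsMaxAntichain lt Q := by
  simp only [IsLtMaxAntichain, IsMaxAntichain, isLtAntichain_iff_isAntichain]

section Antichain

variable {α : Type*} {r : α → α → Prop} {s : Set α}

theorem IsAntichain.exists_isMaxAntichain_superset (hs : IsAntichain r s) :
    ∃ t, IsMaxAntichain r t ∧ s ⊆ t := by
  obtain ⟨t, hst, ht⟩ := zorn_subset_nonempty {t | IsAntichain r t}
    (fun c hc hchain _ => ⟨⋃₀ c, hchain.pairwise_sUnion.2 hc, fun _ => Set.subset_sUnion_of_mem⟩)
    s hs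
  exact ⟨t, ⟨ht.prop, fun u hu htu => ht.eq_of_subset hu htu⟩, hst⟩

theorem IsMaxAntichain.mem_or_rel (hs : IsMaxAntichain r s) (x : α) :
    x ∈ s ∨ ∃ y ∈ s, r x y ∨ r y x := by
  by_contra! h
  have hins : IsAntichain r (insert x s) :=
    hs.1.insert (fun y hy _ => (h.2 y hy).2) (fun y hy _ => (h.2 y hy).1)
  exact h.1 ((hs.2 hins (Set.subset_insert x s)).symm ▸ Set.mem_insert x s)

theorem isAntichain_pair {a b : α} (hab : ¬ r a b) (hba : ¬ r b a) : IsAntichain r {a, b} :=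
  IsAntichain.singleton.insert (fun _ hc _ => (Set.mem_singleton_iff.1 hc).symm ▸ hba)
    (fun _ hc _ => (Set.mem_singleton_iff.1 hc).symm ▸ hab)

theorem IsAntichain.not_rel_of_mem (hirr : ∀ x, ¬ r x x) (hs : IsAntichain r s) {a b : α}
    (ha : a ∈ s) (hb : b ∈ s) : ¬ r a b :=
  fun h => hs ha hb (fun e => hirr a (e ▸ h)) h

end Antichain

section AchPrec

variable {P : Type} {lt : P → P → Prop} {U V W : Set P}

theorem achPrec_asymm (hU : IsMaxAntichain lt U) (hV : IsMaxAntichain lt V)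
    (hUV : achPrec lt U V) : ¬ achPrec lt V U := by
  intro hVU
  have hunion : IsAntichain lt (U ∪ V) := isAntichain_union.2
    ⟨hU.1, hV.1, fun u hu v hv _ => ⟨fun h => hVU.2 v hv u hu h, fun h => hUV.2 u hu v hv h⟩⟩
  exact hUV.1 ((hU.2 hunion Set.subset_union_left).trans (hV.2 hunion Set.subset_union_right).symm)

theorem achPrec_trans (htrans : ∀ x y z, lt x y → lt y z → lt x z)
    (hU : IsMaxAntichain lt U) (hV : IsMaxAntichain lt V)
    (hUV : achPrec lt U V) (hVW : achPrec lt V W) : achPrec lt U W := by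
  refine ⟨?_, fun u hu w hw hwu => ?_⟩
  · rintro rfl
    exact achPrec_asymm hU hV hUV hVW
  rcases hV.mem_or_rel w with hwV | ⟨v, hv, hwv | hvw⟩
  · exact hUV.2 u hu w hwV hwu
  · exact hVW.2 v hv w hw hwv
  · exact hUV.2 u hu v hv (htrans v w u hvw hwu)

theorem achPrec_total (hirr : ∀ x, ¬ lt x x)
    (hinterval : ∀ x y z w, lt x z → lt y w → lt x w ∨ lt y z)
    (hU : IsAntichain lt U) (hV : IsAntichain lt V) :
    U = V ∨ achPrec lt U V ∨ achPrec lt V U := by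
  by_contra! h
  obtain ⟨hne, hUV, hVU⟩ := h
  simp only [achPrec, not_and, not_forall, not_not] at hUV hVU
  obtain ⟨u, hu, v, hv, hvu⟩ := hUV hne
  obtain ⟨v', hv', u', hu', hu'v'⟩ := hVU (Ne.symm hne)
  rcases hinterval v u' u v' hvu hu'v' with hvv' | hu'u
  · exact hV.not_rel_of_mem hirr hv hv' hvv'
  · exact hU.not_rel_of_mem hirr hu' hu hu'u

theorem interval_of_achPrec_total (hirr : ∀ x, ¬ lt x x)
    (htrans : ∀ x y z, lt x y → lt y z → lt x z)
    (htotal : ∀ U V, IsMaxAntichain lt U → IsMaxAntichain lt V →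
      U = V ∨ achPrec lt U V ∨ achPrec lt V U)
    (x y z w : P) (hxz : lt x z) (hyw : lt y w) : lt x w ∨ lt y z := by
  by_contra! h
  obtain ⟨hxw, hyz⟩ := h
  have hwx : ¬ lt w x := fun hwx => hyz (htrans y w z hyw (htrans w x z hwx hxz))
  have hzy : ¬ lt z y := fun hzy => hxw (htrans x z w hxz (htrans z y w hzy hyw))
  obtain ⟨U, hU, hxwU⟩ := (isAntichain_pair hxw hwx).exists_isMaxAntichain_superset
  obtain ⟨V, hV, hyzV⟩ := (isAntichain_pair hyz hzy).exists_isMaxAntichain_superset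
  have hxU : x ∈ U := hxwU (Set.mem_insert x {w})
  have hwU : w ∈ U := hxwU (Set.mem_insert_of_mem x rfl)
  have hyV : y ∈ V := hyzV (Set.mem_insert y {z})
  have hzV : z ∈ V := hyzV (Set.mem_insert_of_mem y rfl)
  rcases htotal U V hU hV with rfl | hUV | hVU
  · exact hU.1.not_rel_of_mem hirr hxU hzV hxz
  · exact hUV.2 w hwU y hyV hyw
  · exact hVU.2 z hzV x hxU hxz

end AchPrec

theorem interval_iff_achPrec_linear_general
    {P : Type}
    (lt : P → P → Prop)
    (hlt_irr : ∀ x, ¬ lt x x) (hlt_tr : ∀ x y z, lt x y → lt y z → lt x z) :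
    (∀ x y z w, lt x z → lt y w → lt x w ∨ lt y z) ↔
    ((∀ U, IsLtMaxAntichain lt U → ¬ achPrec lt U U) ∧
     (∀ U V W, IsLtMaxAntichain lt U → IsLtMaxAntichain lt V → IsLtMaxAntichain lt W →
       achPrec lt U V → achPrec lt V W → achPrec lt U W) ∧
     (∀ U V, IsLtMaxAntichain lt U → IsLtMaxAntichain lt V →
       U = V ∨ achPrec lt U V ∨ achPrec lt V U)) := by
  simp only [isLtMaxAntichain_iff_isMaxAntichain]
  refine ⟨fun hinterval => ⟨fun U _ hUU => hUU.1 rfl, ?_, ?_⟩,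
    fun ⟨_, _, htotal⟩ => interval_of_achPrec_total hlt_irr hlt_tr htotal⟩
  · exact fun U V W hU hV _ => achPrec_trans hlt_tr hU hV
  · exact fun U V hU hV => achPrec_total hlt_irr hinterval hU.1 hV.1

/-- A finite strict partial order `(P, <)` is an interval order
(i.e., `x < z` and `y < w` imply `x < w` or `y < z`) if and only if the relation
`≺` on its maximal antichains is a (strict) linear order. -/
theorem interval_iff_achPrec_linear
    {P : Type} [Finite P]
    (lt : P → P → Prop)
    (hlt_irr : ∀ x, ¬ lt x x) (hlt_tr : ∀ x y z, lt x y → lt y z → lt x z) :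
    (∀ x y z w, lt x z → lt y w → lt x w ∨ lt y z) ↔
    ((∀ U, IsLtMaxAntichain lt U → ¬ achPrec lt U U) ∧
     (∀ U V W, IsLtMaxAntichain lt U → IsLtMaxAntichain lt V → IsLtMaxAntichain lt W →
       achPrec lt U V → achPrec lt V W → achPrec lt U W) ∧
     (∀ U V, IsLtMaxAntichain lt U → IsLtMaxAntichain lt V →
       U = V ∨ achPrec lt U V ∨ achPrec lt V U)) :=
  interval_iff_achPrec_linear_general lt hlt_irr hlt_tr
end

section
/- If P = P_1 * P_2 * ⋯ * P_m is the minimal discrete decomposition of an interval ipomset P, then the track object □^P equals the iterated gluing □^{P_1} * ⋯ * □^{P_m} of the standard cubes of the discrete pieces. -/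
attribute [local instance] Classical.propDecidable

/-- The three possible states of an event. -/
inductive Tri
  | zero | ex | one

/-- A pre-ipomset: the raw data of a labelled partially ordered multiset
with interfaces over the alphabet `L`. -/
structure PreIpomset (L : Type) where
  car : Type
  lt : car → car → Prop
  eo : car → car → Prop
  lab : car → L
  S : Set car
  T : Set car

/-- `P` is an ipomset: the carrier is finite, `lt` (precedence) and `eo` (event
order) are strict partial orders whose union is total, the source interface
consists of `lt`-minimal elements and the target interface of `lt`-maximal ones. -/
def IsIpomset {L : Type} (P : PreIpomset L) : Prop :=
  Finite P.car ∧
  (∀ x, ¬ P.lt x x) ∧ (∀ x y z, P.lt x y → P.lt y z → P.lt x z) ∧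
  (∀ x, ¬ P.eo x x) ∧ (∀ x y z, P.eo x y → P.eo y z → P.eo x z) ∧
  (∀ x y, x ≠ y → P.lt x y ∨ P.lt y x ∨ P.eo x y ∨ P.eo y x) ∧
  (∀ x ∈ P.S, ∀ y, ¬ P.lt y x) ∧ (∀ x ∈ P.T, ∀ y, ¬ P.lt x y)

/-- `P` is an interval ipomset: the precedence order is an interval order. -/
def IsInterval {L : Type} (P : PreIpomset L) : Prop :=
  ∀ x y z w, P.lt x z → P.lt y w → P.lt x w ∨ P.lt y z

/-- `P` is discrete: the precedence order is empty. -/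
def IsDiscreteIpom {L : Type} (P : PreIpomset L) : Prop := ∀ x y, ¬ P.lt x y

/-- The canonical inclusion of `Q` into the gluing `P * Q` (whose carrier is
modelled as `P.car ⊕ {q : Q.car // q ∉ Q.S}`): elements of `S_Q` are identified
with elements of `T_P` via the interface isomorphism `f`. -/
noncomputable def iotaQ {L : Type} (P Q : PreIpomset L)
    (f : {x : P.car // x ∈ P.T} ≃ {y : Q.car // y ∈ Q.S}) :
    Q.car → P.car ⊕ {q : Q.car // q ∉ Q.S} :=
  fun q => if h : q ∈ Q.S then Sum.inl (f.symm ⟨q, h⟩).1 else Sum.inr ⟨q, h⟩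

/-- The gluing composition `P * Q` of pre-ipomsets along the interface
isomorphism `f : T_P ≃ S_Q`.  The precedence order is
`<_P ∪ <_Q ∪ (P ∖ T_P) × (Q ∖ S_Q)`, the event order is the transitive closure
of `⇢_P ∪ ⇢_Q`, the source interface is `S_P` and the target interface `T_Q`. -/
noncomputable def glue {L : Type} (P Q : PreIpomset L)
    (f : {x : P.car // x ∈ P.T} ≃ {y : Q.car // y ∈ Q.S}) : PreIpomset L where
  car := P.car ⊕ {q : Q.car // q ∉ Q.S}
  lt := fun x y =>
    (∃ a b, x = Sum.inl a ∧ y = Sum.inl b ∧ P.lt a b) ∨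
    (∃ a b, x = iotaQ P Q f a ∧ y = iotaQ P Q f b ∧ Q.lt a b) ∨
    (∃ a b, x = Sum.inl a ∧ y = iotaQ P Q f b ∧ a ∉ P.T ∧ b ∉ Q.S)
  eo := Relation.TransGen (fun x y =>
    (∃ a b, x = Sum.inl a ∧ y = Sum.inl b ∧ P.eo a b) ∨
    (∃ a b, x = iotaQ P Q f a ∧ y = iotaQ P Q f b ∧ Q.eo a b))
  lab := fun x => match x with
    | Sum.inl a => P.lab a
    | Sum.inr q => Q.lab q.1
  S := Sum.inl '' P.S
  T := (iotaQ P Q f) '' Q.T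

/-- The interface isomorphism `f : T_P ≃ S_Q` is a conclist isomorphism:
it preserves the event order and the labels. -/
def GlueOK {L : Type} (P Q : PreIpomset L)
    (f : {x : P.car // x ∈ P.T} ≃ {y : Q.car // y ∈ Q.S}) : Prop :=
  (∀ a b : {x : P.car // x ∈ P.T}, P.eo a.1 b.1 ↔ Q.eo (f a).1 (f b).1) ∧
  (∀ a : {x : P.car // x ∈ P.T}, Q.lab (f a).1 = P.lab a.1)

/-- Isomorphism of pre-ipomsets: a bijection preserving precedence, event order,
labels and both interfaces. -/
def IpomIso {L : Type} (A B : PreIpomset L) : Prop :=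
  ∃ e : A.car ≃ B.car,
    (∀ x y, A.lt x y ↔ B.lt (e x) (e y)) ∧
    (∀ x y, A.eo x y ↔ B.eo (e x) (e y)) ∧
    (∀ x, B.lab (e x) = A.lab x) ∧
    (e '' A.S = B.S) ∧ (e '' A.T = B.T)

/-- The `ε`-component of a composition: `η(u) = ε (g⁻¹ u)` for `u ∈ g(Q)`,
and `η(u) = ζ u` otherwise. -/
noncomputable def compEps {A B : Type} (g : A → B) (ε : A → Tri) (ζ : B → Tri) : B → Tri :=
  fun b => if h : ∃ a, g a = b then ε h.choose else ζ b

/-- The relation `≼_ipom = {(1,1),(0,0),(ex,ex),(1,ex),(1,0),(ex,0)}`. -/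
def ipomRel : Tri → Tri → Prop := fun a b =>
  (a = Tri.one ∧ b = Tri.one) ∨ (a = Tri.zero ∧ b = Tri.zero) ∨
  (a = Tri.ex ∧ b = Tri.ex) ∨ (a = Tri.one ∧ b = Tri.ex) ∨
  (a = Tri.one ∧ b = Tri.zero) ∨ (a = Tri.ex ∧ b = Tri.zero)

/-- `x` and `y` are concurrent (incomparable for the precedence order). -/
def IpomPar {L : Type} (P : PreIpomset L) (x y : P.car) : Prop :=
  x ≠ y ∧ ¬ P.lt x y ∧ ¬ P.lt y x

/-- `(f, ε)` is a morphism of (interval) ipomsets from `P` to `Q`: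
`f` is injective, reflects the precedence order, preserves the essential event
order, and `ε : Q → {0, ex, 1}` satisfies `ε⁻¹(ex) = f(P)` and is compatible
with the precedence order via `≼_ipom`. -/
def IsIPHom {L : Type} (P Q : PreIpomset L) (f : P.car → Q.car) (ε : Q.car → Tri) : Prop :=
  Function.Injective f ∧
  (∀ x y, Q.lt (f x) (f y) → P.lt x y) ∧
  (∀ x y, IpomPar P x y → P.eo x y → Q.eo (f x) (f y)) ∧
  (∀ q, ε q = Tri.ex ↔ q ∈ Set.range f) ∧
  (∀ q q', Q.lt q q' → ipomRel (ε q) (ε q'))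

/-- The interface conclist of the gluing `Q * R`, i.e. the discrete ipomset on
`S_R ≅ T_Q`, with full interfaces. -/
def interfaceOb {L : Type} (R : PreIpomset L) : PreIpomset L where
  car := {r : R.car // r ∈ R.S}
  lt := fun _ _ => False
  eo := fun a b => R.eo a.1 b.1
  lab := fun a => R.lab a.1
  S := Set.univ
  T := Set.univ

/-- Function part of the initial inclusion `U → R` of the interface. -/
def uInMap {L : Type} (R : PreIpomset L) : (interfaceOb R).car → R.car := Subtype.val

/-- `ε`-part of the initial inclusion `U → R` (events outside `S_R` unstarted). -/
noncomputable def uInEps {L : Type} (R : PreIpomset L) : R.car → Tri :=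
  fun r => if r ∈ R.S then Tri.ex else Tri.zero

/-- Function part of the final inclusion `U → Q` of the interface. -/
noncomputable def uFinMap {L : Type} (Q R : PreIpomset L)
    (g : {x : Q.car // x ∈ Q.T} ≃ {y : R.car // y ∈ R.S}) :
    (interfaceOb R).car → Q.car := fun u => (g.symm u).1

/-- `ε`-part of the final inclusion `U → Q` (events outside `T_Q` terminated). -/
noncomputable def uFinEps {L : Type} (Q : PreIpomset L) : Q.car → Tri :=
  fun q => if q ∈ Q.T then Tri.ex else Tri.one

/-- `ε`-part of the initial inclusion `Q → Q * R`. -/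
def iQeps {L : Type} (Q R : PreIpomset L)
    (g : {x : Q.car // x ∈ Q.T} ≃ {y : R.car // y ∈ R.S}) : (glue Q R g).car → Tri :=
  fun x => match x with
    | Sum.inl _ => Tri.ex
    | Sum.inr _ => Tri.zero

/-- `ε`-part of the final inclusion `R → Q * R`. -/
noncomputable def fReps {L : Type} (Q R : PreIpomset L)
    (g : {x : Q.car // x ∈ Q.T} ≃ {y : R.car // y ∈ R.S}) : (glue Q R g).car → Tri :=
  fun x => if x ∈ Set.range (iotaQ Q R g) then Tri.ex else Tri.one

/-- The track object `□^{Q*R}` is the pushout of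
`□^R ← □^U → □^Q` (along the initial inclusion of `□^U` into `□^R` and the
final inclusion of `□^U` into `□^Q`).  Since colimits of presheaves are
computed objectwise, this is expressed on each cell-set
`□^P[V] = hom_IP(V, P)`, for every conclist `V`: the square commutes, the two
legs into `hom(V, Q*R)` are injective and jointly surjective, and their
intersection is exactly the image of `hom(V, U)`. -/
def TrackGluePushout {L : Type} (Q R : PreIpomset L)
    (g : {x : Q.car // x ∈ Q.T} ≃ {y : R.car // y ∈ R.S}) : Prop :=
  ∀ (V : PreIpomset L), IsIpomset V → IsDiscreteIpom V →
    -- the square commutes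
    ((∀ h θ, IsIPHom V (interfaceOb R) h θ →
      ((Sum.inl ∘ (uFinMap Q R g ∘ h) : V.car → (glue Q R g).car)
          = iotaQ Q R g ∘ (uInMap R ∘ h) ∧
        compEps (Sum.inl : Q.car → (glue Q R g).car)
            (compEps (uFinMap Q R g) θ (uFinEps Q)) (iQeps Q R g)
          = compEps (iotaQ Q R g) (compEps (uInMap R) θ (uInEps R)) (fReps Q R g))) ∧
    -- joint surjectivity of the two legs
    (∀ k κ, IsIPHom V (glue Q R g) k κ →
      (∃ h θ, IsIPHom V Q h θ ∧ k = Sum.inl ∘ h ∧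
        κ = compEps (Sum.inl : Q.car → (glue Q R g).car) θ (iQeps Q R g)) ∨
      (∃ h θ, IsIPHom V R h θ ∧ k = iotaQ Q R g ∘ h ∧
        κ = compEps (iotaQ Q R g) θ (fReps Q R g))) ∧
    -- injectivity of the leg through □^Q
    (∀ h θ h' θ', IsIPHom V Q h θ → IsIPHom V Q h' θ' →
      (Sum.inl ∘ h : V.car → (glue Q R g).car) = Sum.inl ∘ h' →
      compEps (Sum.inl : Q.car → (glue Q R g).car) θ (iQeps Q R g)
        = compEps (Sum.inl : Q.car → (glue Q R g).car) θ' (iQeps Q R g) →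
      h = h' ∧ θ = θ') ∧
    -- injectivity of the leg through □^R
    (∀ h θ h' θ', IsIPHom V R h θ → IsIPHom V R h' θ' →
      iotaQ Q R g ∘ h = iotaQ Q R g ∘ h' →
      compEps (iotaQ Q R g) θ (fReps Q R g) = compEps (iotaQ Q R g) θ' (fReps Q R g) →
      h = h' ∧ θ = θ') ∧
    -- the intersection of the legs is the image of □^U
    (∀ hq θq hr θr, IsIPHom V Q hq θq → IsIPHom V R hr θr →
      (Sum.inl ∘ hq : V.car → (glue Q R g).car) = iotaQ Q R g ∘ hr →
      compEps (Sum.inl : Q.car → (glue Q R g).car) θq (iQeps Q R g)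
        = compEps (iotaQ Q R g) θr (fReps Q R g) →
      ∃ h0 θ0, IsIPHom V (interfaceOb R) h0 θ0 ∧
        hq = uFinMap Q R g ∘ h0 ∧ θq = compEps (uFinMap Q R g) θ0 (uFinEps Q) ∧
        hr = uInMap R ∘ h0 ∧ θr = compEps (uInMap R) θ0 (uInEps R)))

/-- `P` is an iterated (right-bracketed) gluing `P₁ * (P₂ * (⋯ * P_m))` of
discrete ipomsets, as given by the minimal discrete decomposition of an
interval ipomset. -/
inductive DiscTower {L : Type} : PreIpomset L → Prop
  | single (P : PreIpomset L) (hP : IsIpomset P) (hd : IsDiscreteIpom P) : DiscTower P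
  | step (P Q : PreIpomset L)
      (f : {x : P.car // x ∈ P.T} ≃ {y : Q.car // y ∈ Q.S})
      (hP : IsIpomset P) (hd : IsDiscreteIpom P) (hf : GlueOK P Q f)
      (hQ : DiscTower Q) : DiscTower (glue P Q f)

/-- `□^P` is the iterated gluing (pushout) of the standard cubes of its discrete
pieces: at every stage of the decomposition the corresponding track objects form
a pushout. -/
inductive TowerPushout {L : Type} : PreIpomset L → Prop
  | single (P : PreIpomset L) (hd : IsDiscreteIpom P) : TowerPushout P
  | step (P Q : PreIpomset L)
      (f : {x : P.car // x ∈ P.T} ≃ {y : Q.car // y ∈ Q.S})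
      (hd : IsDiscreteIpom P)
      (hpush : TrackGluePushout P Q f)
      (hQ : TowerPushout Q) : TowerPushout (glue P Q f)

/-! The gluing `Q * R` only identifies `T_Q` with `S_R`, so a morphism from a discrete conclist
`V` into `Q * R` either leaves every event of `R ∖ S_R` unstarted, and then factors through `Q`,
or it starts one of them; since all of `Q ∖ T_Q` precedes that event and `V` has no precedence,
every event of `Q ∖ T_Q` is then terminated and the morphism factors through `R`. Both
factorisations are unique, and a morphism factoring both ways lands in `S_R ≅ T_Q`, which gives
the pushout property at each stage of the tower. The only non-formal input is that the event
order of `Q * R`, a transitive closure, restricts to those of `Q` and `R`: a chain leaving `Q`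
re-enters it through the interface, where the two event orders agree. -/

open Function Relation

section TransGenGluing

variable {X : Type*} {A B : X → X → Prop} [IsTrans X A] [IsTrans X B] {U W : Set X}

lemma transGen_or_imp_shapes (hAU : ∀ ⦃x y⦄, A x y → x ∈ U ∧ y ∈ U)
    (hBW : ∀ ⦃x y⦄, B x y → x ∈ W ∧ y ∈ W)
    (hBA : ∀ ⦃x y⦄, B x y → x ∈ U → y ∈ U → A x y)
    (hAB : ∀ ⦃x y⦄, A x y → x ∈ W → y ∈ W → B x y) {x y : X}
    (hxy : TransGen (fun x y => A x y ∨ B x y) x y) :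
    A x y ∨ B x y ∨ Comp A B x y ∨ Comp B A x y := by
  induction hxy with
  | single hxy => rcases hxy with h | h <;> simp [h]
  | tail _ hyz ih =>
    rcases hyz with hyz | hyz <;> rcases ih with hxy | hxy | ⟨m, hxm, hmy⟩ | ⟨m, hxm, hmy⟩
    · exact .inl (_root_.trans hxy hyz)
    · exact .inr (.inr (.inr ⟨_, hxy, hyz⟩))
    -- the `B`-step of `A ∘ B ∘ A` joins two points of `U`, so it is an `A`-step
    · exact .inl (_root_.trans hxm (_root_.trans (hBA hmy (hAU hxm).2 (hAU hyz).1) hyz))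
    · exact .inr (.inr (.inr ⟨m, hxm, _root_.trans hmy hyz⟩))
    · exact .inr (.inr (.inl ⟨_, hxy, hyz⟩))
    · exact .inr (.inl (_root_.trans hxy hyz))
    · exact .inr (.inr (.inl ⟨m, hxm, _root_.trans hmy hyz⟩))
    · exact .inr (.inl (_root_.trans hxm (_root_.trans (hAB hmy (hBW hxm).2 (hBW hyz).1) hyz)))

lemma transGen_or_left_of_agree (hAU : ∀ ⦃x y⦄, A x y → x ∈ U ∧ y ∈ U)
    (hBW : ∀ ⦃x y⦄, B x y → x ∈ W ∧ y ∈ W)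
    (hBA : ∀ ⦃x y⦄, B x y → x ∈ U → y ∈ U → A x y)
    (hAB : ∀ ⦃x y⦄, A x y → x ∈ W → y ∈ W → B x y) {x y : X}
    (hxy : TransGen (fun x y => A x y ∨ B x y) x y) (hx : x ∈ U) (hy : y ∈ U) : A x y := by
  rcases transGen_or_imp_shapes hAU hBW hBA hAB hxy with
    h | h | ⟨m, hxm, hmy⟩ | ⟨m, hxm, hmy⟩
  · exact h
  · exact hBA h hx hy
  · exact _root_.trans hxm (hBA hmy (hAU hxm).2 hy)
  · exact _root_.trans (hBA hxm hx (hAU hmy).1) hmy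

lemma transGen_or_right_of_agree (hAU : ∀ ⦃x y⦄, A x y → x ∈ U ∧ y ∈ U)
    (hBW : ∀ ⦃x y⦄, B x y → x ∈ W ∧ y ∈ W)
    (hBA : ∀ ⦃x y⦄, B x y → x ∈ U → y ∈ U → A x y)
    (hAB : ∀ ⦃x y⦄, A x y → x ∈ W → y ∈ W → B x y) {x y : X}
    (hxy : TransGen (fun x y => A x y ∨ B x y) x y) (hx : x ∈ W) (hy : y ∈ W) : B x y :=
  transGen_or_left_of_agree hBW hAU hAB hBA (TransGen.mono (fun _ _ => Or.symm) _ _ hxy) hx hy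

end TransGenGluing

section CompEps

variable {A B C : Type} {g : A → B}

lemma compEps_apply_of_injective (hg : Injective g) (ε : A → Tri) (ζ : B → Tri) (a : A) :
    compEps g ε ζ (g a) = ε a := by
  have h : ∃ a', g a' = g a := ⟨a, rfl⟩
  rw [compEps, dif_pos h, hg h.choose_spec]

lemma compEps_of_notMem_range {b : B} (hb : b ∉ Set.range g) (ε : A → Tri) (ζ : B → Tri) :
    compEps g ε ζ b = ζ b :=
  dif_neg hb

lemma compEps_comp_self (hg : Injective g) {κ ζ : B → Tri}
    (hκ : ∀ b ∉ Set.range g, κ b = ζ b) : compEps g (κ ∘ g) ζ = κ := by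
  funext b
  by_cases hb : b ∈ Set.range g
  · obtain ⟨a, rfl⟩ := hb
    exact compEps_apply_of_injective hg _ _ a
  · rw [compEps_of_notMem_range hb, hκ b hb]

lemma compEps_compEps {g' : C → A} (hg : Injective g) (hg' : Injective g')
    (θ : C → Tri) (ζ' : A → Tri) (ζ : B → Tri) :
    compEps g (compEps g' θ ζ') ζ = compEps (g ∘ g') θ (compEps g ζ' ζ) := by
  funext b
  by_cases hb : b ∈ Set.range g
  · obtain ⟨a, rfl⟩ := hb
    rw [compEps_apply_of_injective hg]
    by_cases ha : a ∈ Set.range g'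
    · obtain ⟨c, rfl⟩ := ha
      rw [compEps_apply_of_injective hg', ← comp_apply (f := g),
        compEps_apply_of_injective (hg.comp hg')]
    · have hga : g a ∉ Set.range (g ∘ g') := by
        rintro ⟨c, hc⟩
        exact ha ⟨c, hg hc⟩
      rw [compEps_of_notMem_range ha, compEps_of_notMem_range hga,
        compEps_apply_of_injective hg]
  · have hgb : b ∉ Set.range (g ∘ g') := fun ⟨c, hc⟩ => hb ⟨g' c, hc⟩
    rw [compEps_of_notMem_range hb, compEps_of_notMem_range hgb,
      compEps_of_notMem_range hb]

lemma compEps_congr_right (θ : A → Tri) {ζ ζ' : B → Tri}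
    (h : ∀ b ∉ Set.range g, ζ b = ζ' b) : compEps g θ ζ = compEps g θ ζ' := by
  funext b
  by_cases hb : b ∈ Set.range g
  · simp only [compEps, dif_pos (Set.mem_range.mp hb)]
  · rw [compEps_of_notMem_range hb, compEps_of_notMem_range hb, h b hb]

lemma eq_of_comp_eq_of_compEps_eq {h h' : C → A} {θ θ' : A → Tri} {ζ : B → Tri}
    (hg : Injective g) (hh : g ∘ h = g ∘ h') (hθ : compEps g θ ζ = compEps g θ' ζ) :
    h = h' ∧ θ = θ' :=
  ⟨hg.comp_left hh, funext fun a => by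
    simpa only [compEps_apply_of_injective hg] using congrFun hθ (g a)⟩

end CompEps

section IPHom

variable {L : Type} {V A B : PreIpomset L}

lemma ipomRel_eq_one_or_ex_ex {a b : Tri} (h : ipomRel a b) (hb : b ≠ Tri.zero) :
    a = Tri.one ∨ (a = Tri.ex ∧ b = Tri.ex) := by
  rcases h with h | h | h | h | h | h <;> simp_all

lemma IsIPHom.not_ex_ex_of_lt {k : V.car → B.car} {κ : B.car → Tri} (hk : IsIPHom V B k κ)
    (hV : IsDiscreteIpom V) {b b' : B.car} (hbb' : B.lt b b') :
    ¬ (κ b = Tri.ex ∧ κ b' = Tri.ex) := by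
  rintro ⟨hb, hb'⟩
  obtain ⟨v, rfl⟩ := (hk.2.2.2.1 b).mp hb
  obtain ⟨v', rfl⟩ := (hk.2.2.2.1 b').mp hb'
  exact hV v v' (hk.2.1 v v' hbb')

lemma IsIPHom.eps_apply_eq_ex {k : V.car → B.car} {κ : B.car → Tri} (hk : IsIPHom V B k κ)
    (v : V.car) : κ (k v) = Tri.ex :=
  (hk.2.2.2.1 _).mpr ⟨v, rfl⟩

lemma IsIPHom.of_comp {g : A.car → B.car} (hg : Injective g)
    (hlt : ∀ a a', A.lt a a' → B.lt (g a) (g a'))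
    (heo : ∀ a a', B.eo (g a) (g a') → A.eo a a')
    {h : V.car → A.car} {κ : B.car → Tri} (hk : IsIPHom V B (g ∘ h) κ) :
    IsIPHom V A h (κ ∘ g) := by
  obtain ⟨hinj, hrefl, heo', heps, hrel⟩ := hk
  refine ⟨hinj.of_comp, fun x y hxy => hrefl x y (hlt _ _ hxy),
    fun x y hpar hxy => heo _ _ (heo' x y hpar hxy), fun a => ?_,
    fun a a' haa' => hrel _ _ (hlt _ _ haa')⟩
  rw [comp_apply, heps, Set.range_comp, hg.mem_set_image]

lemma IsIPHom.exists_factor {g : A.car → B.car} (hg : Injective g)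
    (hlt : ∀ a a', A.lt a a' → B.lt (g a) (g a'))
    (heo : ∀ a a', B.eo (g a) (g a') → A.eo a a')
    {k : V.car → B.car} {κ : B.car → Tri} (hk : IsIPHom V B k κ)
    (hrange : ∀ v, k v ∈ Set.range g)
    {ζ : B.car → Tri} (hζ : ∀ b ∉ Set.range g, κ b = ζ b) :
    ∃ h θ, IsIPHom V A h θ ∧ k = g ∘ h ∧ κ = compEps g θ ζ := by
  choose h hh using hrange
  have hkh : k = g ∘ h := funext fun v => (hh v).symm
  subst hkh
  exact ⟨h, κ ∘ g, hk.of_comp hg hlt heo, rfl, (compEps_comp_self hg hζ).symm⟩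

end IPHom

section Glue

variable {L : Type} {P Q : PreIpomset L} {f : {x : P.car // x ∈ P.T} ≃ {y : Q.car // y ∈ Q.S}}

lemma iotaQ_of_mem {b : Q.car} (hb : b ∈ Q.S) :
    iotaQ P Q f b = Sum.inl (f.symm ⟨b, hb⟩).1 :=
  dif_pos hb

lemma iotaQ_of_notMem {b : Q.car} (hb : b ∉ Q.S) : iotaQ P Q f b = Sum.inr ⟨b, hb⟩ :=
  dif_neg hb

lemma inl_eq_iotaQ_iff {a : P.car} {b : Q.car} :
    Sum.inl a = iotaQ P Q f b ↔ ∃ hb : b ∈ Q.S, a = (f.symm ⟨b, hb⟩).1 := by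
  by_cases hb : b ∈ Q.S
  · simp [iotaQ_of_mem hb, hb]
  · simp [iotaQ_of_notMem hb, hb]

lemma iotaQ_injective : Injective (iotaQ P Q f) := by
  intro b b' hbb'
  by_cases hb : b ∈ Q.S
  · rw [iotaQ_of_mem hb, inl_eq_iotaQ_iff] at hbb'
    obtain ⟨hb', hbb'⟩ := hbb'
    simpa using f.symm.injective (Subtype.ext hbb')
  · by_cases hb' : b' ∈ Q.S
    · rw [iotaQ_of_mem hb', eq_comm, inl_eq_iotaQ_iff] at hbb'
      exact absurd hbb'.1 hb
    · rw [iotaQ_of_notMem hb, iotaQ_of_notMem hb'] at hbb'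
      simpa using hbb'

lemma iotaQ_apply_coe (t : {x : P.car // x ∈ P.T}) : iotaQ P Q f (f t).1 = Sum.inl t.1 := by
  simp [iotaQ_of_mem (f t).2]

lemma inl_mem_range_iotaQ {a : P.car} :
    (Sum.inl a : P.car ⊕ {q : Q.car // q ∉ Q.S}) ∈ Set.range (iotaQ P Q f) ↔ a ∈ P.T := by
  refine ⟨?_, fun ha => ⟨_, iotaQ_apply_coe ⟨a, ha⟩⟩⟩
  rintro ⟨b, hb⟩
  obtain ⟨hbS, rfl⟩ := inl_eq_iotaQ_iff.mp hb.symm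
  exact (f.symm ⟨b, hbS⟩).2

lemma inr_mem_range_iotaQ (q : {q : Q.car // q ∉ Q.S}) :
    (Sum.inr q : P.car ⊕ {q : Q.car // q ∉ Q.S}) ∈ Set.range (iotaQ P Q f) :=
  ⟨q.1, iotaQ_of_notMem q.2⟩

lemma iotaQ_mem_range_inl {b : Q.car} :
    iotaQ P Q f b ∈ Set.range Sum.inl ↔ b ∈ Q.S :=
  ⟨fun ⟨_, ha⟩ => (inl_eq_iotaQ_iff.mp ha).1, fun hb => ⟨_, (iotaQ_of_mem hb).symm⟩⟩

lemma isTrans_map_of_injective {α X : Type*} {r : α → α → Prop} [IsTrans α r] {i : α → X}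
    (hi : Injective i) : IsTrans X (Relation.Map r i i) :=
  ⟨fun _ _ _ ⟨a, _, hab, ha, hb⟩ ⟨_, c, hbc, hb', hc⟩ =>
    ⟨a, c, _root_.trans hab (hi (hb.trans hb'.symm) ▸ hbc), ha, hc⟩⟩

lemma map_mem_range {α X : Type*} {r : α → α → Prop} {i : α → X} ⦃x y : X⦄
    (h : Relation.Map r i i x y) : x ∈ Set.range i ∧ y ∈ Set.range i := by
  obtain ⟨a, b, -, rfl, rfl⟩ := h
  exact ⟨⟨a, rfl⟩, ⟨b, rfl⟩⟩

lemma glue_eo_eq : (glue P Q f).eo = TransGen (fun x y => Relation.Map P.eo Sum.inl Sum.inl x y ∨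
    Relation.Map Q.eo (iotaQ P Q f) (iotaQ P Q f) x y) := by
  funext x y
  simp only [glue, Relation.Map]
  congr! 5; simp only [eq_comm, and_comm, and_left_comm]

lemma GlueOK.map_right_le_left (hf : GlueOK P Q f) ⦃x y : P.car ⊕ {q : Q.car // q ∉ Q.S}⦄
    (hxy : Relation.Map Q.eo (iotaQ P Q f) (iotaQ P Q f) x y)
    (hx : x ∈ Set.range Sum.inl) (hy : y ∈ Set.range Sum.inl) :
    Relation.Map P.eo Sum.inl Sum.inl x y := by
  obtain ⟨b, b', hbb', rfl, rfl⟩ := hxy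
  have hb := iotaQ_mem_range_inl.mp hx
  have hb' := iotaQ_mem_range_inl.mp hy
  refine ⟨_, _, (hf.1 (f.symm ⟨b, hb⟩) (f.symm ⟨b', hb'⟩)).mpr ?_,
    (iotaQ_of_mem hb).symm, (iotaQ_of_mem hb').symm⟩
  simpa using hbb'

lemma GlueOK.map_left_le_right (hf : GlueOK P Q f) ⦃x y : P.car ⊕ {q : Q.car // q ∉ Q.S}⦄
    (hxy : Relation.Map P.eo Sum.inl Sum.inl x y)
    (hx : x ∈ Set.range (iotaQ P Q f)) (hy : y ∈ Set.range (iotaQ P Q f)) :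
    Relation.Map Q.eo (iotaQ P Q f) (iotaQ P Q f) x y := by
  obtain ⟨a, a', haa', rfl, rfl⟩ := hxy
  have ha := inl_mem_range_iotaQ.mp hx
  have ha' := inl_mem_range_iotaQ.mp hy
  exact ⟨_, _, (hf.1 ⟨a, ha⟩ ⟨a', ha'⟩).mp haa', iotaQ_apply_coe _, iotaQ_apply_coe _⟩

lemma glue_eo_inl [IsTrans P.car P.eo] [IsTrans Q.car Q.eo] (hf : GlueOK P Q f)
    {a b : P.car} (h : (glue P Q f).eo (Sum.inl a) (Sum.inl b)) : P.eo a b := by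
  have := isTrans_map_of_injective (r := P.eo) (Sum.inl_injective (β := {q : Q.car // q ∉ Q.S}))
  have := isTrans_map_of_injective (r := Q.eo) (iotaQ_injective (f := f))
  rw [glue_eo_eq] at h
  have := transGen_or_left_of_agree map_mem_range map_mem_range hf.map_right_le_left
    hf.map_left_le_right h ⟨a, rfl⟩ ⟨b, rfl⟩
  exact (map_apply_apply Sum.inl_injective Sum.inl_injective _ _ _).mp this

lemma glue_eo_iotaQ [IsTrans P.car P.eo] [IsTrans Q.car Q.eo] (hf : GlueOK P Q f)
    {a b : Q.car} (h : (glue P Q f).eo (iotaQ P Q f a) (iotaQ P Q f b)) : Q.eo a b := by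
  have := isTrans_map_of_injective (r := P.eo) (Sum.inl_injective (β := {q : Q.car // q ∉ Q.S}))
  have := isTrans_map_of_injective (r := Q.eo) (iotaQ_injective (f := f))
  rw [glue_eo_eq] at h
  have := transGen_or_right_of_agree map_mem_range map_mem_range hf.map_right_le_left
    hf.map_left_le_right h ⟨a, rfl⟩ ⟨b, rfl⟩
  exact (map_apply_apply iotaQ_injective iotaQ_injective _ _ _).mp this

end Glue

section TrackGlue

variable {L : Type} {Q R V : PreIpomset L}
  {g : {x : Q.car // x ∈ Q.T} ≃ {y : R.car // y ∈ R.S}}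

lemma inl_comp_uFinMap :
    (Sum.inl ∘ uFinMap Q R g : _ → (glue Q R g).car) = iotaQ Q R g ∘ uInMap R :=
  funext fun u => (iotaQ_of_mem u.2).symm

lemma uFinMap_injective : Injective (uFinMap Q R g) :=
  fun _ _ h => g.symm.injective (Subtype.ext h)

lemma uInMap_injective : Injective (uInMap R) :=
  fun _ _ h => Subtype.ext h

lemma compEps_inl_uFinEps_eq {x : (glue Q R g).car}
    (hx : x ∉ Set.range (iotaQ Q R g ∘ uInMap R)) :
    compEps Sum.inl (uFinEps Q) (iQeps Q R g) x
      = compEps (iotaQ Q R g) (uInEps R) (fReps Q R g) x := by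
  rcases x with a | q
  · have ha : a ∉ Q.T := fun ha => hx ⟨g ⟨a, ha⟩, iotaQ_apply_coe ⟨a, ha⟩⟩
    have ha' : (Sum.inl a : (glue Q R g).car) ∉ Set.range (iotaQ Q R g) :=
      mt inl_mem_range_iotaQ.mp ha
    calc _ = uFinEps Q a := compEps_apply_of_injective Sum.inl_injective _ _ a
      _ = fReps Q R g (Sum.inl a) := (if_neg ha).trans (if_neg ha').symm
      _ = _ := (compEps_of_notMem_range ha' _ _).symm
  · have hq : (Sum.inr q : (glue Q R g).car) ∉ Set.range Sum.inl := by simp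
    calc _ = Tri.zero := compEps_of_notMem_range hq _ _
      _ = uInEps R q.1 := (if_neg q.2).symm
      _ = compEps (iotaQ Q R g) (uInEps R) (fReps Q R g) (iotaQ Q R g q.1) :=
        (compEps_apply_of_injective iotaQ_injective _ _ _).symm
      _ = _ := by rw [iotaQ_of_notMem q.2]

lemma compEps_inl_uFinMap_eq (θ : (interfaceOb R).car → Tri) :
    compEps (Sum.inl : Q.car → (glue Q R g).car) (compEps (uFinMap Q R g) θ (uFinEps Q))
        (iQeps Q R g)
      = compEps (iotaQ Q R g) (compEps (uInMap R) θ (uInEps R)) (fReps Q R g) :=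
  calc _ = compEps (Sum.inl ∘ uFinMap Q R g) θ (compEps Sum.inl (uFinEps Q) (iQeps Q R g)) :=
        compEps_compEps Sum.inl_injective uFinMap_injective _ _ _
    _ = compEps (Sum.inl ∘ uFinMap Q R g) θ (compEps (iotaQ Q R g) (uInEps R) (fReps Q R g)) :=
        compEps_congr_right θ fun _ hx => compEps_inl_uFinEps_eq (inl_comp_uFinMap ▸ hx)
    _ = compEps (iotaQ Q R g ∘ uInMap R) θ (compEps (iotaQ Q R g) (uInEps R) (fReps Q R g)) :=
        congrArg (fun i => compEps i θ _) inl_comp_uFinMap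
    _ = _ := (compEps_compEps iotaQ_injective uInMap_injective _ _ _).symm

lemma inl_lt_glue {a b : Q.car} (h : Q.lt a b) :
    (glue Q R g).lt (Sum.inl a) (Sum.inl b) :=
  .inl ⟨a, b, rfl, rfl, h⟩

lemma iotaQ_lt_glue {a b : R.car} (h : R.lt a b) :
    (glue Q R g).lt (iotaQ Q R g a) (iotaQ Q R g b) :=
  .inr (.inl ⟨a, b, rfl, rfl, h⟩)

lemma inl_lt_inr_glue {a : Q.car} (ha : a ∉ Q.T) (q : {q : R.car // q ∉ R.S}) :
    (glue Q R g).lt (Sum.inl a) (Sum.inr q) :=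
  .inr (.inr ⟨a, q.1, rfl, (iotaQ_of_notMem q.2).symm, ha, q.2⟩)

variable {k : V.car → (glue Q R g).car} {κ : (glue Q R g).car → Tri}

lemma IsIPHom.exists_factor_inl [IsTrans Q.car Q.eo] [IsTrans R.car R.eo] (hg : GlueOK Q R g)
    (hk : IsIPHom V (glue Q R g) k κ) (hκ : ∀ q, κ (Sum.inr q) = Tri.zero) :
    ∃ h θ, IsIPHom V Q h θ ∧ k = Sum.inl ∘ h ∧
      κ = compEps (Sum.inl : Q.car → (glue Q R g).car) θ (iQeps Q R g) := by
  refine hk.exists_factor Sum.inl_injective (fun _ _ => inl_lt_glue) (fun _ _ => glue_eo_inl hg)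
    (fun v => ?_) ?_
  · rcases hkv : k v with a | q
    · exact ⟨a, rfl⟩
    · have hex := hk.eps_apply_eq_ex v
      rw [hkv, hκ] at hex
      nomatch hex
  · rintro (a | q) hx
    · exact absurd ⟨a, rfl⟩ hx
    · exact hκ q

lemma IsIPHom.eps_inl_eq_one (hV : IsDiscreteIpom V) (hk : IsIPHom V (glue Q R g) k κ)
    {q : {q : R.car // q ∉ R.S}} (hq : κ (Sum.inr q) ≠ Tri.zero) {a : Q.car} (ha : a ∉ Q.T) :
    κ (Sum.inl a) = Tri.one := by
  have hlt := inl_lt_inr_glue (g := g) ha q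
  rcases ipomRel_eq_one_or_ex_ex (hk.2.2.2.2 _ _ hlt) hq with h | h
  · exact h
  · exact absurd h (hk.not_ex_ex_of_lt hV hlt)

lemma IsIPHom.exists_factor_iotaQ [IsTrans Q.car Q.eo] [IsTrans R.car R.eo] (hg : GlueOK Q R g)
    (hV : IsDiscreteIpom V) (hk : IsIPHom V (glue Q R g) k κ) {q : {q : R.car // q ∉ R.S}}
    (hq : κ (Sum.inr q) ≠ Tri.zero) :
    ∃ h θ, IsIPHom V R h θ ∧ k = iotaQ Q R g ∘ h ∧
      κ = compEps (iotaQ Q R g) θ (fReps Q R g) := by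
  have hone : ∀ a ∉ Q.T, κ (Sum.inl a) = Tri.one := fun a ha => hk.eps_inl_eq_one hV hq ha
  refine hk.exists_factor iotaQ_injective (fun _ _ => iotaQ_lt_glue)
    (fun _ _ => glue_eo_iotaQ hg) (fun v => ?_) ?_
  · rcases hkv : k v with a | q'
    · refine inl_mem_range_iotaQ.mpr (by_contra fun ha => ?_)
      have hex := hk.eps_apply_eq_ex v
      rw [hkv, hone a ha] at hex
      nomatch hex
    · exact inr_mem_range_iotaQ q'
  · rintro (a | q') hx
    · rw [hone a (mt inl_mem_range_iotaQ.mpr hx)]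
      exact (if_neg hx).symm
    · exact absurd (inr_mem_range_iotaQ q') hx

lemma exists_interface_of_legs_eq {hq : V.car → Q.car} {θq : Q.car → Tri}
    {hr : V.car → R.car} {θr : R.car → Tri} (hhr : IsIPHom V R hr θr)
    (hk : (Sum.inl ∘ hq : V.car → (glue Q R g).car) = iotaQ Q R g ∘ hr)
    (hε : compEps (Sum.inl : Q.car → (glue Q R g).car) θq (iQeps Q R g)
      = compEps (iotaQ Q R g) θr (fReps Q R g)) :
    ∃ h0 θ0, IsIPHom V (interfaceOb R) h0 θ0 ∧
      hq = uFinMap Q R g ∘ h0 ∧ θq = compEps (uFinMap Q R g) θ0 (uFinEps Q) ∧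
      hr = uInMap R ∘ h0 ∧ θr = compEps (uInMap R) θ0 (uInEps R) := by
  have hS : ∀ v, hr v ∈ R.S := fun v => iotaQ_mem_range_inl.mp ⟨hq v, congrFun hk v⟩
  set h0 : V.car → (interfaceOb R).car := fun v => ⟨hr v, hS v⟩
  have hr0 : hr = uInMap R ∘ h0 := rfl
  have hq0 : hq = uFinMap Q R g ∘ h0 :=
    funext fun v => Sum.inl_injective ((congrFun hk v).trans (iotaQ_of_mem (hS v)))
  have hθ : θq ∘ uFinMap Q R g = θr ∘ uInMap R := funext fun u =>
    calc θq (uFinMap Q R g u)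
        = compEps Sum.inl θq (iQeps Q R g) (Sum.inl (uFinMap Q R g u)) :=
          (compEps_apply_of_injective Sum.inl_injective _ _ _).symm
      _ = compEps (iotaQ Q R g) θr (fReps Q R g) (iotaQ Q R g (uInMap R u)) :=
          (congrFun hε _).trans (congrArg _ (congrFun inl_comp_uFinMap u))
      _ = θr (uInMap R u) := compEps_apply_of_injective iotaQ_injective _ _ _
  refine ⟨h0, θr ∘ uInMap R, (hr0 ▸ hhr).of_comp uInMap_injective (fun _ _ => False.elim)
    (fun _ _ h => h), hq0, ?_, hr0, ?_⟩
  · refine hθ ▸ (compEps_comp_self uFinMap_injective fun a ha => ?_).symm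
    have ha' : (Sum.inl a : (glue Q R g).car) ∉ Set.range (iotaQ Q R g) :=
      fun h => ha ⟨g ⟨a, inl_mem_range_iotaQ.mp h⟩,
        congrArg Subtype.val (g.symm_apply_apply _)⟩
    calc θq a = compEps Sum.inl θq (iQeps Q R g) (Sum.inl a) :=
          (compEps_apply_of_injective Sum.inl_injective _ _ _).symm
      _ = fReps Q R g (Sum.inl a) := (congrFun hε _).trans (compEps_of_notMem_range ha' _ _)
      _ = Tri.one := if_neg ha'
      _ = uFinEps Q a := (if_neg (mt inl_mem_range_iotaQ.mpr ha')).symm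
  · refine (compEps_comp_self uInMap_injective fun r hr => ?_).symm
    have hr' : r ∉ R.S := fun h => hr ⟨⟨r, h⟩, rfl⟩
    have hιr : iotaQ Q R g r ∉ Set.range Sum.inl := mt iotaQ_mem_range_inl.mp hr'
    calc θr r = compEps (iotaQ Q R g) θr (fReps Q R g) (iotaQ Q R g r) :=
          (compEps_apply_of_injective iotaQ_injective _ _ _).symm
      _ = iQeps Q R g (iotaQ Q R g r) :=
          (congrFun hε _).symm.trans (compEps_of_notMem_range hιr _ _)
      _ = Tri.zero := by rw [iotaQ_of_notMem hr']; rfl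
      _ = uInEps R r := (if_neg hr').symm

theorem GlueOK.trackGluePushout [IsTrans Q.car Q.eo] [IsTrans R.car R.eo] (hg : GlueOK Q R g) :
    TrackGluePushout Q R g := by
  intro V _ hV
  refine ⟨fun h θ _ => ⟨?_, compEps_inl_uFinMap_eq θ⟩, fun k κ hk => ?_,
    fun _ _ _ _ _ _ => eq_of_comp_eq_of_compEps_eq Sum.inl_injective,
    fun _ _ _ _ _ _ => eq_of_comp_eq_of_compEps_eq iotaQ_injective,
    fun _ _ _ _ _ hhr => exists_interface_of_legs_eq hhr⟩
  · exact funext fun v => congrFun inl_comp_uFinMap (h v)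
  · by_cases hκ : ∀ q, κ (Sum.inr q) = Tri.zero
    · exact .inl (hk.exists_factor_inl hg hκ)
    · obtain ⟨q, hq⟩ := not_forall.mp hκ
      exact .inr (hk.exists_factor_iotaQ hg hV hq)

end TrackGlue

lemma IsIpomset.isTrans_eo {L : Type} {P : PreIpomset L} (hP : IsIpomset P) :
    IsTrans P.car P.eo :=
  ⟨hP.2.2.2.2.1⟩

lemma DiscTower.isTrans_eo {L : Type} {P : PreIpomset L} (h : DiscTower P) :
    IsTrans P.car P.eo := by
  cases h with
  | single P hP _ => exact hP.isTrans_eo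
  | step => exact ⟨fun _ _ _ => TransGen.trans⟩

theorem track_of_minimal_decomposition_general {L : Type} (P : PreIpomset L)
    (h : DiscTower P) : TowerPushout P := by
  induction h with
  | single P _ hd => exact .single P hd
  | step P Q f hP hd hf hQ ih =>
    have := hP.isTrans_eo
    have := hQ.isTrans_eo
    exact .step P Q f hd hf.trackGluePushout ih

/-- If `P = P₁ * P₂ * ⋯ * P_m` is the (minimal) discrete
decomposition of an interval ipomset `P`, then the track object `□^P` equals
the iterated gluing `□^{P₁} * ⋯ * □^{P_m}` of the standard cubes of the
discrete pieces: every gluing stage of the decomposition yields a pushout of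
the corresponding track objects. -/
theorem track_of_minimal_decomposition {L : Type} (P : PreIpomset L)
    (hP : IsIpomset P) (hPi : IsInterval P)
    (h : DiscTower P) : TowerPushout P :=
  track_of_minimal_decomposition_general P h
end
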